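/- For the nonnegative regularized square-root LASSO min over x ≥ 0 of ||Ax - b||_2 + λ^T x with A = [Φ; σI], b = [y; 0], y ≠ 0, the point x = 0 is optimal if and only if φ_i^T y ≤ λ_i ||y||_2 for all i = 1,…,n. -/

import Mathlib

/-- Objective of the nonnegative regularized square-root LASSO with
`A = [Φ; σI]`, `b = [y; 0]`: `‖Ax - b‖₂ + λᵀ x` (for `x ≥ 0`). -/
noncomputable def nnrsqrtObj {m n : ℕ} (Φ : Matrix (Fin m) (Fin n) ℝ)
    (y : Fin m → ℝ) (σ : ℝ) (lam : Fin n → ℝ) (x : Fin n → ℝ) : ℝ :=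
  Real.sqrt ((∑ k, (Φ.mulVec x - y) k ^ 2) + ∑ j, (σ * x j) ^ 2)
    + ∑ i, lam i * x i

noncomputable def norm2 {m : ℕ} (v : Fin m → ℝ) : ℝ := Real.sqrt (∑ k, v k ^ 2)
noncomputable def dot {m : ℕ} (u v : Fin m → ℝ) : ℝ := ∑ k, u k * v k

/-!
Write `N = ‖y‖₂` and `cᵢ = φᵢᵀ y`, so that the objective at `0` is `N`.
If `cᵢ ≤ λᵢ N` for all `i`, Cauchy–Schwarz gives
`N ‖Φx - y‖₂ ≥ yᵀ(y - Φx) = N² - Σ cᵢ xᵢ ≥ N² - N λᵀx` for `x ≥ 0`, hence `0` is optimal.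
If `cᵢ > λᵢ N` for some `i`, the objective along the ray `t eᵢ` is
`√(N² - 2tcᵢ + t²dᵢ) + λᵢ t` with `dᵢ = ‖φᵢ‖₂² + σ²`, whose right derivative at `0`
is `λᵢ - cᵢ / N < 0`, so a small step `t > 0` decreases it.
-/

open Finset Matrix

lemma dot_eq_dotProduct {m : ℕ} (u v : Fin m → ℝ) : dot u v = u ⬝ᵥ v := rfl

lemma norm2_sq {m : ℕ} (v : Fin m → ℝ) : norm2 v ^ 2 = ∑ k, v k ^ 2 :=
  Real.sq_sqrt (sum_nonneg fun k _ => sq_nonneg (v k))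

lemma dot_self {m : ℕ} (v : Fin m → ℝ) : dot v v = norm2 v ^ 2 := by
  rw [norm2_sq, dot]
  simp only [sq]

lemma norm2_pos {m : ℕ} {v : Fin m → ℝ} (hv : v ≠ 0) : 0 < norm2 v := by
  obtain ⟨k, hk⟩ := Function.ne_iff.mp hv
  exact Real.sqrt_pos.mpr <|
    sum_pos' (fun j _ => sq_nonneg (v j)) ⟨k, mem_univ k, sq_pos_of_ne_zero hk⟩

lemma norm2_sub_comm {m : ℕ} (u v : Fin m → ℝ) : norm2 (u - v) = norm2 (v - u) := by
  simp only [norm2, Pi.sub_apply, sub_sq_comm]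

lemma dot_le_norm2_mul_norm2 {m : ℕ} (u v : Fin m → ℝ) : dot u v ≤ norm2 u * norm2 v :=
  Real.sum_mul_le_sqrt_mul_sqrt univ u v

lemma dot_mulVec {m n : ℕ} (Φ : Matrix (Fin m) (Fin n) ℝ) (y : Fin m → ℝ) (x : Fin n → ℝ) :
    dot y (Φ *ᵥ x) = ∑ i, dot (fun k => Φ k i) y * x i := by
  rw [dot_eq_dotProduct, dotProduct_mulVec]
  simp only [dotProduct, vecMul, dot, mul_comm]

lemma two_mul_mul_sqrt_le {N Q : ℝ} (hQ : 0 ≤ Q) : 2 * N * √Q ≤ Q + N ^ 2 := by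
  simpa [Real.sq_sqrt hQ, add_comm] using two_mul_le_add_sq N √Q

lemma exists_pos_sqrt_add_mul_lt {N c d l : ℝ} (hN : 0 < N) (hd : 0 ≤ d)
    (hQ : ∀ t, 0 ≤ N ^ 2 - 2 * t * c + t ^ 2 * d) (h : l * N < c) :
    ∃ t > 0, √(N ^ 2 - 2 * t * c + t ^ 2 * d) + l * t < N := by
  set δ := c - l * N
  have hδ : 0 < δ := sub_pos.mpr h
  refine ⟨δ / (d + 1), by positivity, ?_⟩
  set t := δ / (d + 1)
  have ht : 0 < t := by positivity
  have htd : t * d < δ := by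
    have : t * (d + 1) = δ := div_mul_cancel₀ δ (by positivity)
    linarith
  have hdrop : 2 * N * (√(N ^ 2 - 2 * t * c + t ^ 2 * d) + l * t) < 2 * N * N :=
    calc 2 * N * (√(N ^ 2 - 2 * t * c + t ^ 2 * d) + l * t)
        ≤ (N ^ 2 - 2 * t * c + t ^ 2 * d) + N ^ 2 + 2 * N * (l * t) := by
          linarith [two_mul_mul_sqrt_le (N := N) (hQ t)]
      _ = 2 * N * N - t * (2 * δ - t * d) := by ring
      _ < 2 * N * N := by linarith [mul_pos ht (by linarith : 0 < 2 * δ - t * d)]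
  exact lt_of_mul_lt_mul_left hdrop (by positivity)

section Objective

variable {m n : ℕ} (Φ : Matrix (Fin m) (Fin n) ℝ) (y : Fin m → ℝ) (σ : ℝ) (lam : Fin n → ℝ)

/-- `‖Ax - b‖₂²` for `A = [Φ; σI]`, `b = [y; 0]`. -/
def residualSq (x : Fin n → ℝ) : ℝ := ∑ k, (Φ *ᵥ x - y) k ^ 2 + ∑ j, (σ * x j) ^ 2

lemma residualSq_nonneg (x : Fin n → ℝ) : 0 ≤ residualSq Φ y σ x := by
  unfold residualSq; positivity

lemma nnrsqrtObj_eq (x : Fin n → ℝ) :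
    nnrsqrtObj Φ y σ lam x = √(residualSq Φ y σ x) + ∑ i, lam i * x i := rfl

lemma nnrsqrtObj_zero : nnrsqrtObj Φ y σ lam 0 = norm2 y := by
  simp [nnrsqrtObj, norm2]

lemma residualSq_single (i : Fin n) (t : ℝ) :
    residualSq Φ y σ (Pi.single i t) = norm2 y ^ 2 - 2 * t * dot (fun k => Φ k i) y
      + t ^ 2 * (∑ k, Φ k i ^ 2 + σ ^ 2) := by
  have hfit : ∑ k, (Φ *ᵥ Pi.single i t - y) k ^ 2
      = ∑ k, (t ^ 2 * Φ k i ^ 2 - 2 * t * (Φ k i * y k) + y k ^ 2) := by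
    refine sum_congr rfl fun k _ => ?_
    simp only [mulVec_single, Pi.sub_apply, Pi.smul_apply, col_apply, op_smul_eq_mul]
    ring
  have hpen : ∑ j, (σ * (Pi.single i t : Fin n → ℝ) j) ^ 2 = t ^ 2 * σ ^ 2 := by
    simp [Pi.single_apply, mul_ite, ite_pow, mul_pow, mul_comm]
  rw [residualSq, hfit, hpen, sum_add_distrib, sum_sub_distrib, ← mul_sum, ← mul_sum,
    norm2_sq, dot]
  ring

variable {y}

lemma exists_nnrsqrtObj_lt_of_lt_dot (hy : y ≠ 0) {i : Fin n}
    (h : lam i * norm2 y < dot (fun k => Φ k i) y) :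
    ∃ x, (∀ j, 0 ≤ x j) ∧ nnrsqrtObj Φ y σ lam x < nnrsqrtObj Φ y σ lam 0 := by
  have hQ (t : ℝ) := residualSq_single Φ y σ i t ▸ residualSq_nonneg Φ y σ (Pi.single i t)
  obtain ⟨t, ht, hlt⟩ := exists_pos_sqrt_add_mul_lt (norm2_pos hy) (by positivity) hQ h
  refine ⟨Pi.single i t, (Pi.single_nonneg.mpr ht.le : 0 ≤ (Pi.single i t : Fin n → ℝ)), ?_⟩
  rw [nnrsqrtObj_zero, nnrsqrtObj_eq, residualSq_single]
  simpa [Pi.single_apply] using hlt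

lemma norm2_le_nnrsqrtObj (hy : y ≠ 0) (h : ∀ i, dot (fun k => Φ k i) y ≤ lam i * norm2 y)
    {x : Fin n → ℝ} (hx : ∀ i, 0 ≤ x i) : norm2 y ≤ nnrsqrtObj Φ y σ lam x := by
  set N := norm2 y
  have hN : 0 < N := norm2_pos hy
  have hcorr : dot y (Φ *ᵥ x) ≤ N * ∑ i, lam i * x i := by
    rw [dot_mulVec, mul_sum]
    exact sum_le_sum fun i _ => (mul_le_mul_of_nonneg_right (h i) (hx i)).trans_eq (by ring)
  have hcs : N ^ 2 - dot y (Φ *ᵥ x) ≤ N * norm2 (Φ *ᵥ x - y) :=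
    calc N ^ 2 - dot y (Φ *ᵥ x) = dot y (y - Φ *ᵥ x) := by
          simp only [N, ← dot_self, dot_eq_dotProduct, dotProduct_sub]
      _ ≤ N * norm2 (Φ *ᵥ x - y) := norm2_sub_comm (Φ *ᵥ x) y ▸ dot_le_norm2_mul_norm2 y _
  have hfit : norm2 (Φ *ᵥ x - y) ≤ √(residualSq Φ y σ x) :=
    Real.sqrt_le_sqrt (le_add_of_nonneg_right (by positivity))
  have hkey : N * (N - ∑ i, lam i * x i) ≤ N * norm2 (Φ *ᵥ x - y) := by
    rw [mul_sub, ← sq]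
    linarith
  rw [nnrsqrtObj_eq]
  linarith [le_of_mul_le_mul_left hkey hN]

end Objective

theorem nnrsqrtLASSO_zero_optimal_iff_general {m n : ℕ}
    (Φ : Matrix (Fin m) (Fin n) ℝ) (y : Fin m → ℝ) (hy : y ≠ 0)
    (σ : ℝ) (lam : Fin n → ℝ) :
    (∀ x : Fin n → ℝ, (∀ i, 0 ≤ x i) →
        nnrsqrtObj Φ y σ lam 0 ≤ nnrsqrtObj Φ y σ lam x)
      ↔ ∀ i, dot (fun k => Φ k i) y ≤ lam i * norm2 y := by
  constructor
  · intro hopt i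
    by_contra! hdot
    obtain ⟨x, hx, hlt⟩ := exists_nnrsqrtObj_lt_of_lt_dot Φ σ lam hy hdot
    exact (hopt x hx).not_gt hlt
  · intro hdot x hx
    rw [nnrsqrtObj_zero]
    exact norm2_le_nnrsqrtObj Φ σ lam hy hdot hx

theorem nnrsqrtLASSO_zero_optimal_iff {m n : ℕ}
    (Φ : Matrix (Fin m) (Fin n) ℝ) (y : Fin m → ℝ) (hy : y ≠ 0)
    (σ : ℝ) (hσ : 0 ≤ σ) (lam : Fin n → ℝ) (hlam : ∀ i, 0 ≤ lam i) :
    (∀ x : Fin n → ℝ, (∀ i, 0 ≤ x i) →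
        nnrsqrtObj Φ y σ lam 0 ≤ nnrsqrtObj Φ y σ lam x)
      ↔ ∀ i, dot (fun k => Φ k i) y ≤ lam i * norm2 y :=
  nnrsqrtLASSO_zero_optimal_iff_general Φ y hy σ lam
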